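/- Let φ : L →+* L be the ring homomorphism given by t ↦ t^q (the q-power Frobenius of L). Then MvPolynomial.map φ F = G, MvPolynomial.map φ G = H, MvPolynomial.map φ H = F, and MvPolynomial.map φ T = T. -/

import Mathlib

/-!
Since `L` has `q ^ 3` elements, `α ^ q ^ 3 = α`, so the Frobenius `t ↦ t ^ q` sends the coefficients
`α, α ^ q, α ^ q ^ 2` of each linear form to those of the next one: it permutes `x' ↦ y' ↦ z' ↦ x'`
cyclically, hence `F ↦ G ↦ H ↦ F` and fixes `T`.
-/

open MvPolynomial

/-- The linear form x' = α•x + α^q•y + α^(q²)•z. -/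
noncomputable def xLin (L : Type*) [CommRing L] (q : ℕ) (α : L) : MvPolynomial (Fin 3) L :=
  α • X 0 + α ^ q • X 1 + α ^ q ^ 2 • X 2

/-- The linear form y' = α^q•x + α^(q²)•y + α•z. -/
noncomputable def yLin (L : Type*) [CommRing L] (q : ℕ) (α : L) : MvPolynomial (Fin 3) L :=
  α ^ q • X 0 + α ^ q ^ 2 • X 1 + α • X 2

/-- The linear form z' = α^(q²)•x + α•y + α^q•z. -/
noncomputable def zLin (L : Type*) [CommRing L] (q : ℕ) (α : L) : MvPolynomial (Fin 3) L :=
  α ^ q ^ 2 • X 0 + α • X 1 + α ^ q • X 2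

/-- F = x'² * y'. -/
noncomputable def Fcub (L : Type*) [CommRing L] (q : ℕ) (α : L) : MvPolynomial (Fin 3) L :=
  xLin L q α ^ 2 * yLin L q α

/-- G = y'² * z'. -/
noncomputable def Gcub (L : Type*) [CommRing L] (q : ℕ) (α : L) : MvPolynomial (Fin 3) L :=
  yLin L q α ^ 2 * zLin L q α

/-- H = z'² * x'. -/
noncomputable def Hcub (L : Type*) [CommRing L] (q : ℕ) (α : L) : MvPolynomial (Fin 3) L :=
  zLin L q α ^ 2 * xLin L q α

/-- T = x' * y' * z'. -/
noncomputable def Tcub (L : Type*) [CommRing L] (q : ℕ) (α : L) : MvPolynomial (Fin 3) L :=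
  xLin L q α * yLin L q α * zLin L q α

theorem pow_card_pow_finrank (K : Type*) {L : Type*} [Field K] [Fintype K] [Field L] [Fintype L]
    [Algebra K L] (t : L) : t ^ Fintype.card K ^ Module.finrank K L = t := by
  rw [← Module.card_eq_pow_finrank, FiniteField.pow_card]

section CoefficientCycle

variable {L : Type*} [CommRing L] {q : ℕ} {α : L} {φ : L →+* L}

theorem frobenius_cycle_coeffs (hφ : ∀ t : L, φ t = t ^ q) (hα : α ^ q ^ 3 = α) :
    φ α = α ^ q ∧ φ (α ^ q) = α ^ q ^ 2 ∧ φ (α ^ q ^ 2) = α := by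
  refine ⟨hφ α, ?_, ?_⟩
  · rw [hφ, ← pow_mul, sq]
  · rw [hφ, ← pow_mul, ← pow_succ]
    exact hα

theorem map_xLin_eq_yLin (h₀ : φ α = α ^ q) (h₁ : φ (α ^ q) = α ^ q ^ 2)
    (h₂ : φ (α ^ q ^ 2) = α) :
    MvPolynomial.map φ (xLin L q α) = yLin L q α := by
  simp only [xLin, yLin, smul_eq_C_mul, map_add, map_mul, map_C, map_X, h₀, h₁, h₂]

theorem map_yLin_eq_zLin (h₀ : φ α = α ^ q) (h₁ : φ (α ^ q) = α ^ q ^ 2)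
    (h₂ : φ (α ^ q ^ 2) = α) :
    MvPolynomial.map φ (yLin L q α) = zLin L q α := by
  simp only [yLin, zLin, smul_eq_C_mul, map_add, map_mul, map_C, map_X, h₀, h₁, h₂]

theorem map_zLin_eq_xLin (h₀ : φ α = α ^ q) (h₁ : φ (α ^ q) = α ^ q ^ 2)
    (h₂ : φ (α ^ q ^ 2) = α) :
    MvPolynomial.map φ (zLin L q α) = xLin L q α := by
  simp only [zLin, xLin, smul_eq_C_mul, map_add, map_mul, map_C, map_X, h₀, h₁, h₂]

end CoefficientCycle

theorem stmt_4 (K L : Type*) [Field K] [Fintype K] [Field L] [Fintype L] [Algebra K L]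
    (hrank : Module.finrank K L = 3) (α : L)
    (φ : L →+* L) (hφ : ∀ t : L, φ t = t ^ Fintype.card K) :
    MvPolynomial.map φ (Fcub L (Fintype.card K) α) = Gcub L (Fintype.card K) α ∧
    MvPolynomial.map φ (Gcub L (Fintype.card K) α) = Hcub L (Fintype.card K) α ∧
    MvPolynomial.map φ (Hcub L (Fintype.card K) α) = Fcub L (Fintype.card K) α ∧
    MvPolynomial.map φ (Tcub L (Fintype.card K) α) = Tcub L (Fintype.card K) α := by
  have hα : α ^ Fintype.card K ^ 3 = α := hrank ▸ pow_card_pow_finrank K α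
  obtain ⟨h₀, h₁, h₂⟩ := frobenius_cycle_coeffs hφ hα
  have hx := map_xLin_eq_yLin h₀ h₁ h₂
  have hy := map_yLin_eq_zLin h₀ h₁ h₂
  have hz := map_zLin_eq_xLin h₀ h₁ h₂
  refine ⟨?_, ?_, ?_, ?_⟩ <;>
    simp only [Fcub, Gcub, Hcub, Tcub, map_mul, map_pow, hx, hy, hz]
  ring
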